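/- Let a ∈ (0,1), β ≥ 1, λ > 6 with a - 2/β - 2a/λ > 0, and let α ∈ ℝ. Then for every sufficiently small r > 0, the integral over the polydisk Δ_r³ ⊂ ℂ³ of 1/( ((|z₁|+|z₂|^β)^a + |z₃|^λ) · |z₁|² · (-log|z₁|)^α ) with respect to 6-dimensional Lebesgue measure is +∞. -/

import Mathlib

/-!
On the box `t < ‖z₀‖ < 2t`, `‖z₁‖ < t^(1/β)`, `‖z₂‖ < t^(a/λ)` both terms of the first factor of
the denominator are at most `(2‖z₀‖)^a`, and `(-log ‖z₀‖)^α ≤ ‖z₀‖^(-δ)` for small `‖z₀‖`, where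
`δ = (a - 2/β - 2a/λ)/2`. So the integrand is `≳ t^(δ-a-2)` there, while the box has volume
`≍ t^(2 + 2/β + 2a/λ)`; the integral over the polydisk is therefore `≳ t^(-δ)` for every small `t`,
whatever the radius `r > 0`.
-/

open MeasureTheory Complex Real Filter Topology Set Metric

theorem ENNReal.eq_top_of_eventually_ofReal_le {ι : Type*} {l : Filter ι} [l.NeBot] {f : ι → ℝ}
    (hf : Tendsto f l atTop) {I : ENNReal} (h : ∀ᶠ i in l, ENNReal.ofReal (f i) ≤ I) :
    I = ⊤ :=
  ENNReal.eq_top_of_forall_nnreal_le fun r => by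
    obtain ⟨i, hi, hr⟩ := (h.and (hf.eventually_ge_atTop r)).exists
    exact (ENNReal.ofReal_coe_nnreal ▸ ENNReal.ofReal_le_ofReal hr).trans hi

theorem Real.eventually_neg_log_rpow_le_rpow_neg (α : ℝ) {δ : ℝ} (hδ : 0 < δ) :
    ∀ᶠ s in 𝓝[>] 0, s < 1 ∧ (-Real.log s) ^ α ≤ s ^ (-δ) := by
  filter_upwards [(isLittleO_abs_log_rpow_rpow_nhdsGT_zero α (neg_lt_zero.2 hδ)).bound one_pos,
    Ioo_mem_nhdsGT one_pos] with s hs ⟨hs0, hs1⟩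
  have hlog : Real.log s < 0 := Real.log_neg hs0 hs1
  rw [abs_of_neg hlog, norm_of_nonneg (rpow_nonneg (neg_nonneg.2 hlog.le) _),
    norm_of_nonneg (rpow_nonneg hs0.le _), one_mul] at hs
  exact ⟨hs1, hs⟩

theorem Real.eventually_forall_Ioo_two_mul {p : ℝ → Prop} (h : ∀ᶠ s in 𝓝[>] 0, p s) :
    ∀ᶠ t in 𝓝[>] 0, ∀ s ∈ Ioo t (2 * t), p s := by
  obtain ⟨ε, hε, hp⟩ := (nhdsGT_basis (0 : ℝ)).eventually_iff.1 h
  filter_upwards [Ioo_mem_nhdsGT (half_pos hε)] with t ⟨ht0, htε⟩ s ⟨hts, hst⟩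
  exact hp ⟨ht0.trans hts, by linarith⟩

theorem Real.eventually_rpow_lt {p r : ℝ} (hp : 0 < p) (hr : 0 < r) : ∀ᶠ t in 𝓝[>] 0, t ^ p < r :=
  (((continuous_rpow_const hp.le).tendsto' 0 0 (zero_rpow hp.ne')).eventually
    (gt_mem_nhds hr)).filter_mono nhdsWithin_le_nhds

theorem Complex.volume_ball_diff_closedBall (x : ℂ) {r R : ℝ} (hr : 0 ≤ r) (hrR : r < R) :
    volume (ball x R \ closedBall x r) = ENNReal.ofReal (π * (R ^ 2 - r ^ 2)) := by
  rw [measure_sdiff (closedBall_subset_ball hrR) measurableSet_closedBall.nullMeasurableSet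
    measure_closedBall_lt_top.ne, Complex.volume_ball, Complex.volume_closedBall,
    ← ENNReal.ofReal_pow hr, ← ENNReal.ofReal_pow (hr.trans hrR.le), ← ENNReal.sub_mul fun _ _ => ENNReal.coe_ne_top,
    ← ENNReal.ofReal_sub _ (by positivity), ← ENNReal.ofReal_coe_nnreal, NNReal.coe_real_pi,
    ← ENNReal.ofReal_mul (by nlinarith), mul_comm]

theorem Real.rpow_lt_of_lt_rpow_div {u t p q : ℝ} (hu : 0 ≤ u) (ht : 0 ≤ t) (hp : 0 < p)
    (h : u < t ^ (q / p)) : u ^ p < t ^ q := by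
  rw [div_eq_mul_inv, rpow_mul ht] at h
  exact (lt_rpow_inv_iff_of_pos hu (rpow_nonneg ht _) hp).1 h

namespace AdjointIdeal

def shellBox (t ρ₁ ρ₂ : ℝ) : Set (Fin 3 → ℂ) :=
  univ.pi ![ball 0 (2 * t) \ closedBall 0 t, ball 0 ρ₁, ball 0 ρ₂]

theorem measurableSet_shellBox (t ρ₁ ρ₂ : ℝ) : MeasurableSet (shellBox t ρ₁ ρ₂) := by
  refine MeasurableSet.univ_pi fun i => ?_
  fin_cases i
  exacts [measurableSet_ball.diff measurableSet_closedBall, measurableSet_ball, measurableSet_ball]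

theorem mem_shellBox {t ρ₁ ρ₂ : ℝ} {z : Fin 3 → ℂ} :
    z ∈ shellBox t ρ₁ ρ₂ ↔ (t < ‖z 0‖ ∧ ‖z 0‖ < 2 * t) ∧ ‖z 1‖ < ρ₁ ∧ ‖z 2‖ < ρ₂ := by
  simp [shellBox, Fin.forall_fin_succ, and_comm]

theorem volume_shellBox {t ρ₁ ρ₂ : ℝ} (ht : 0 < t) (hρ₁ : 0 ≤ ρ₁) (hρ₂ : 0 ≤ ρ₂) :
    volume (shellBox t ρ₁ ρ₂) = ENNReal.ofReal (3 * π ^ 3 * t ^ 2 * ρ₁ ^ 2 * ρ₂ ^ 2) := by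
  rw [shellBox, volume_pi_pi, Fin.prod_univ_three]
  simp only [Matrix.cons_val_zero, Matrix.cons_val_one, Matrix.cons_val_two, Matrix.tail_cons,
    Matrix.head_cons]
  rw [volume_ball_diff_closedBall 0 ht.le (by linarith),
    show (2 * t) ^ 2 - t ^ 2 = 3 * t ^ 2 by ring, Complex.volume_ball, Complex.volume_ball,
    ← ENNReal.ofReal_pow hρ₁, ← ENNReal.ofReal_pow hρ₂, ← ENNReal.ofReal_coe_nnreal,
    NNReal.coe_real_pi, ← ENNReal.ofReal_mul (by positivity), ← ENNReal.ofReal_mul (by positivity),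
    ← ENNReal.ofReal_mul (by positivity), ← ENNReal.ofReal_mul (by positivity)]
  congr 1
  ring

theorem denominator_le {a β lam α δ s u v : ℝ} (ha : 0 ≤ a) (hs0 : 0 < s) (hs1 : s < 1)
    (hu0 : 0 ≤ u) (hu : u ^ β ≤ s) (hv : v ^ lam ≤ s ^ a)
    (hlog : (-Real.log s) ^ α ≤ s ^ (-δ)) :
    ((s + u ^ β) ^ a + v ^ lam) * s ^ 2 * (-Real.log s) ^ α ≤ 2 ^ (a + 1) * s ^ (a + 2 - δ) := by
  have hlog0 : 0 < -Real.log s := neg_pos.2 (Real.log_neg hs0 hs1)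
  have hfirst : (s + u ^ β) ^ a + v ^ lam ≤ 2 ^ (a + 1) * s ^ a :=
    calc (s + u ^ β) ^ a + v ^ lam ≤ (2 * s) ^ a + s ^ a := by
          gcongr
          linarith
      _ ≤ 2 ^ a * s ^ a + 2 ^ a * s ^ a := by
          rw [mul_rpow zero_le_two hs0.le]
          gcongr
          exact le_mul_of_one_le_left (by positivity) (one_le_rpow one_le_two ha)
      _ = 2 ^ (a + 1) * s ^ a := by rw [rpow_add_one two_ne_zero]; ring
  calc ((s + u ^ β) ^ a + v ^ lam) * s ^ 2 * (-Real.log s) ^ α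
      ≤ 2 ^ (a + 1) * s ^ a * s ^ 2 * s ^ (-δ) := by gcongr
    _ = 2 ^ (a + 1) * s ^ (a + 2 - δ) := by
      rw [sub_eq_add_neg, rpow_add hs0, rpow_add hs0, rpow_two]; ring

theorem le_one_div_denominator {a β lam α δ s u v : ℝ} (ha : 0 ≤ a) (hs0 : 0 < s) (hs1 : s < 1)
    (hu0 : 0 ≤ u) (hu : u ^ β ≤ s) (hv0 : 0 ≤ v) (hv : v ^ lam ≤ s ^ a)
    (hlog : (-Real.log s) ^ α ≤ s ^ (-δ)) :
    2 ^ (-(a + 1)) * s ^ (δ - a - 2) ≤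
      1 / (((s + u ^ β) ^ a + v ^ lam) * s ^ 2 * (-Real.log s) ^ α) := by
  have hlog0 : 0 < -Real.log s := neg_pos.2 (Real.log_neg hs0 hs1)
  have hpos : 0 < ((s + u ^ β) ^ a + v ^ lam) * s ^ 2 * (-Real.log s) ^ α := by
    have := rpow_pos_of_pos hlog0 α
    positivity
  calc 2 ^ (-(a + 1)) * s ^ (δ - a - 2) = (2 ^ (a + 1) * s ^ (a + 2 - δ))⁻¹ := by
        rw [mul_inv, ← rpow_neg zero_le_two, ← rpow_neg hs0.le, neg_sub, sub_add_eq_sub_sub]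
    _ ≤ _ := by
      rw [one_div]
      exact inv_anti₀ hpos (denominator_le ha hs0 hs1 hu0 hu hv hlog)

theorem lintegral_polydisk_eq_top {a β lam r : ℝ} (α : ℝ) (ha : 0 < a) (hβ : 0 < β)
    (hlam : 0 < lam) (hexp : 0 < a - 2 / β - 2 * a / lam) (hr : 0 < r) :
    ∫⁻ z in {z : Fin 3 → ℂ | ∀ i, ‖z i‖ < r},
      ENNReal.ofReal (1 / (((‖z 0‖ + ‖z 1‖ ^ β) ^ a + ‖z 2‖ ^ lam) *
        ‖z 0‖ ^ 2 * (-Real.log (‖z 0‖)) ^ α)) = ⊤ := by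
  set δ := (a - 2 / β - 2 * a / lam) / 2 with hδ
  have hδ0 : 0 < δ := half_pos hexp
  have hδa : δ - a - 2 ≤ 0 := by
    have : 0 < 2 / β + 2 * a / lam := by positivity
    linarith
  set c : ℝ → ℝ := fun t => 2 ^ (-(a + 1)) * (2 * t) ^ (δ - a - 2)
  set K := 2 ^ (-(a + 1)) * 2 ^ (δ - a - 2) * (3 * π ^ 3)
  refine ENNReal.eq_top_of_eventually_ofReal_le
    ((tendsto_rpow_neg_nhdsGT_zero (neg_lt_zero.2 hδ0)).const_mul_atTop
      (by positivity : 0 < K)) ?_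
  filter_upwards [eventually_forall_Ioo_two_mul (eventually_neg_log_rpow_le_rpow_neg α hδ0),
    Ioo_mem_nhdsGT (half_pos hr), eventually_rpow_lt (one_div_pos.2 hβ) hr,
    eventually_rpow_lt (div_pos ha hlam) hr] with t hlog ⟨ht, h2t⟩ hρ₁ hρ₂
  set E := shellBox t (t ^ (1 / β)) (t ^ (a / lam))
  have hsub : E ⊆ {z | ∀ i, ‖z i‖ < r} := by
    intro z hz i
    obtain ⟨⟨-, h0⟩, h1, h2⟩ := mem_shellBox.1 hz
    fin_cases i
    exacts [by simp only [Fin.zero_eta]; linarith, h1.trans hρ₁, h2.trans hρ₂]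
  have hbound : ∀ z ∈ E, c t ≤ 1 / (((‖z 0‖ + ‖z 1‖ ^ β) ^ a + ‖z 2‖ ^ lam) *
      ‖z 0‖ ^ 2 * (-Real.log (‖z 0‖)) ^ α) := by
    intro z hz
    obtain ⟨⟨h0l, h0u⟩, h1, h2⟩ := mem_shellBox.1 hz
    obtain ⟨hs1, hlogs⟩ := hlog _ ⟨h0l, h0u⟩
    have hs0 : 0 < ‖z 0‖ := ht.trans h0l
    refine le_trans ?_ (le_one_div_denominator ha.le hs0 hs1 (norm_nonneg _) ?_ (norm_nonneg _)
      ?_ hlogs)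
    · exact mul_le_mul_of_nonneg_left (rpow_le_rpow_of_nonpos hs0 h0u.le hδa) (by positivity)
    · exact (rpow_one t ▸ rpow_lt_of_lt_rpow_div (norm_nonneg _) ht.le hβ h1).le.trans h0l.le
    · exact (rpow_lt_of_lt_rpow_div (norm_nonneg _) ht.le hlam h2).le.trans
        (rpow_le_rpow ht.le h0l.le ha.le)
  calc ENNReal.ofReal (K * t ^ (-δ)) = ENNReal.ofReal (c t) * volume E := by
        rw [volume_shellBox ht (by positivity) (by positivity),
          ← ENNReal.ofReal_mul (by positivity)]
        congr 1
        have hpow :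
            t ^ (δ - a - 2) * (t ^ 2 * (t ^ (1 / β)) ^ 2 * (t ^ (a / lam)) ^ 2) = t ^ (-δ) := by
          simp only [← rpow_natCast, ← rpow_mul ht.le, ← rpow_add ht]
          congr 1
          rw [hδ]
          push_cast
          ring
        rw [← hpow]
        simp only [c, K, mul_rpow zero_le_two ht.le]
        ring
    _ = ∫⁻ _ in E, ENNReal.ofReal (c t) := (setLIntegral_const _ _).symm
    _ ≤ _ := setLIntegral_mono' (measurableSet_shellBox _ _ _) fun z hz =>
        ENNReal.ofReal_le_ofReal (hbound z hz)
    _ ≤ _ := lintegral_mono_set hsub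

end AdjointIdeal

theorem adjoint_ideal_stmt6_general (a β lam α : ℝ) (ha0 : 0 < a) (hβ : 1 ≤ β)
    (hlam : 6 < lam) (hexp : 0 < a - 2 / β - 2 * a / lam) :
    ∃ r₀ > 0, ∀ r : ℝ, 0 < r → r < r₀ →
      ∫⁻ z in {z : Fin 3 → ℂ | ∀ i, ‖z i‖ < r},
        ENNReal.ofReal (1 /
          (((‖z 0‖ + ‖z 1‖ ^ β) ^ a + ‖z 2‖ ^ lam) *
            ‖z 0‖ ^ 2 * (-Real.log (‖z 0‖)) ^ α)) = ⊤ :=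
  ⟨1, one_pos, fun _ hr _ =>
    AdjointIdeal.lintegral_polydisk_eq_top α ha0 (by linarith) (by linarith) hexp hr⟩

/-- Let `a ∈ (0,1)`, `β ≥ 1`, `λ > 6` with `a - 2/β - 2a/λ > 0`, and `α ∈ ℝ`. Then for every
sufficiently small `r > 0`, the integral over the polydisk `Δ_r³ ⊂ ℂ³` of
`1/(((|z₁|+|z₂|^β)^a + |z₃|^λ)·|z₁|²·(-log|z₁|)^α)` is `+∞`. -/
theorem adjoint_ideal_stmt6 (a β lam α : ℝ) (ha0 : 0 < a) (ha1 : a < 1) (hβ : 1 ≤ β)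
    (hlam : 6 < lam) (hexp : 0 < a - 2 / β - 2 * a / lam) :
    ∃ r₀ > 0, ∀ r : ℝ, 0 < r → r < r₀ →
      ∫⁻ z in {z : Fin 3 → ℂ | ∀ i, ‖z i‖ < r},
        ENNReal.ofReal (1 /
          (((‖z 0‖ + ‖z 1‖ ^ β) ^ a + ‖z 2‖ ^ lam) *
            ‖z 0‖ ^ 2 * (-Real.log (‖z 0‖)) ^ α)) = ⊤ :=
  adjoint_ideal_stmt6_general a β lam α ha0 hβ hlam hexp
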